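/- Let Z be a nonnegative random variable whose tail F̄_Z is regularly varying with index -β, β > 2, and let δ ∈ [2, β). Then E[(Z - xs)₊^δ] ~ C_δ · x^δ · F̄_Z(x) · s^{δ-β} as x → ∞ for each fixed s > 0, where C_δ = δ·∫₁^∞ (z-1)^{δ-1} z^{-β} dz. -/

import Mathlib

/-!
By the layer-cake formula and the substitution `u = y z`,
`E[(Z - y)₊^δ] = δ y^δ ∫₁^∞ (z - 1)^(δ-1) F̄(y z) dz`. After dividing by `F̄(y)`, the integrand
tends to `(z - 1)^(δ-1) z^(-β)` by regular variation. Choosing `γ ∈ (δ, β)`, regular variation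
gives `F̄(2y) ≤ 2^(-γ) F̄(y)` for large `y`; iterating along dyadic scales yields the Potter-type
bound `F̄(y z) / F̄(y) ≤ 2^γ z^(-γ)`, an integrable majorant, so dominated convergence applies.
Finally take `y = x s` and use `F̄(x s) / F̄(x) → s^(-β)`.
-/

open MeasureTheory Filter Set Topology

section LayerCake

variable {Ω : Type*} [MeasurableSpace Ω] (μ : Measure Ω) [IsFiniteMeasure μ]
  {Z : Ω → ℝ} {δ : ℝ}

/-- Both sides are `toReal` of equal lintegrals, so the identity also holds when the moment is
infinite (both sides are then `0`). -/
theorem integral_max_sub_rpow_eq (hZ : AEMeasurable Z μ) (hδ : 0 < δ) (y : ℝ) :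
    ∫ ω, (max (Z ω - y) 0) ^ δ ∂μ
      = δ * ∫ u in Ioi y, (u - y) ^ (δ - 1) * μ.real {ω | u < Z ω} := by
  have hX : AEMeasurable (fun ω => max (Z ω - y) 0) μ := (hZ.sub_const y).max aemeasurable_const
  have htail : Measurable fun u => μ.real {ω | u < Z ω} :=
    Antitone.measurable fun u v huv => measureReal_mono fun ω hω => huv.trans_lt hω
  rw [← (measurePreserving_add_left volume y).setIntegral_preimage_emb
    (measurableEmbedding_addLeft y) (fun u => (u - y) ^ (δ - 1) * μ.real {ω | u < Z ω}) (Ioi y)]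
  simp only [preimage_const_add_Ioi, sub_self, add_sub_cancel_left]
  rw [integral_eq_lintegral_of_nonneg_ae (.of_forall fun ω => by positivity)
    (hX.pow_const δ).aestronglyMeasurable,
    lintegral_rpow_eq_lintegral_meas_lt_mul μ (f := fun ω => max (Z ω - y) 0)
      (.of_forall fun ω => le_max_right _ _) hX hδ,
    ENNReal.toReal_mul, ENNReal.toReal_ofReal hδ.le, integral_eq_lintegral_of_nonneg_ae
      (f := fun t => t ^ (δ - 1) * μ.real {ω | y + t < Z ω})
      (ae_restrict_of_forall_mem measurableSet_Ioi fun t (ht : 0 < t) => by positivity)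
      ((measurable_id.pow_const _).mul (htail.comp (measurable_const_add y))).aestronglyMeasurable]
  congr 2
  refine setLIntegral_congr_fun measurableSet_Ioi fun t (ht : 0 < t) => ?_
  have hset : {ω | t < max (Z ω - y) 0} = {ω | y + t < Z ω} := by
    ext ω
    simp [ht.not_gt, lt_sub_iff_add_lt']
  rw [hset, ENNReal.ofReal_mul (by positivity), ofReal_measureReal, mul_comm]

theorem integral_max_sub_rpow_eq_mul_integral_Ioi_one (hZ : AEMeasurable Z μ) (hδ : 0 < δ)
    {y : ℝ} (hy : 0 < y) :
    ∫ ω, (max (Z ω - y) 0) ^ δ ∂μ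
      = δ * y ^ δ * ∫ z in Ioi 1, (z - 1) ^ (δ - 1) * μ.real {ω | y * z < Z ω} := by
  have hscale := integral_comp_mul_left_Ioi'
    (fun u => (u - y) ^ (δ - 1) * μ.real {ω | u < Z ω}) 1 hy
  rw [mul_one] at hscale
  rw [integral_max_sub_rpow_eq μ hZ hδ y, ← hscale, smul_eq_mul,
    setIntegral_congr_fun measurableSet_Ioi fun z (hz : 1 < z) => by
      rw [show y * z - y = y * (z - 1) by ring, Real.mul_rpow hy.le (by linarith), mul_assoc],
    integral_const_mul, Real.rpow_sub_one hy.ne']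
  field_simp

end LayerCake

section RegularVariation

def RegularlyVaryingAtTop (F : ℝ → ℝ) (ρ : ℝ) : Prop :=
  ∀ s : ℝ, 0 < s → Tendsto (fun x => F (s * x) / F x) atTop (𝓝 (s ^ ρ))

theorem Antitone.eventually_le_two_rpow_mul_rpow_neg {f : ℝ → ℝ} (hf : Antitone f) (hf0 : 0 ≤ f)
    {γ : ℝ} (hγ : 0 ≤ γ) (h2 : ∀ᶠ y in atTop, f (2 * y) ≤ 2 ^ (-γ) * f y) :
    ∀ᶠ y in atTop, ∀ z ≥ 1, f (y * z) ≤ 2 ^ γ * z ^ (-γ) * f y := by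
  obtain ⟨x₀, hx₀⟩ := eventually_atTop.1 h2
  filter_upwards [eventually_ge_atTop x₀, eventually_ge_atTop 0] with y hyx₀ hy0 z hz
  have hdyadic : ∀ n : ℕ, f (2 ^ n * y) ≤ (2 ^ (-γ)) ^ n * f y := by
    intro n
    induction n with
    | zero => simp
    | succ n ih =>
      calc f (2 ^ (n + 1) * y) = f (2 * (2 ^ n * y)) := by ring_nf
        _ ≤ 2 ^ (-γ) * f (2 ^ n * y) :=
          hx₀ _ (hyx₀.trans (le_mul_of_one_le_left hy0 (one_le_pow₀ one_le_two)))
        _ ≤ 2 ^ (-γ) * ((2 ^ (-γ)) ^ n * f y) := by gcongr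
        _ = (2 ^ (-γ)) ^ (n + 1) * f y := by ring
  obtain ⟨n, hnz, hzn⟩ := exists_nat_pow_near hz one_lt_two
  have hpow : ((2 : ℝ) ^ (-γ)) ^ n ≤ 2 ^ γ * z ^ (-γ) :=
    calc ((2 : ℝ) ^ (-γ)) ^ n = 2 ^ γ * ((2 : ℝ) ^ (n + 1)) ^ (-γ) := by
          rw [Real.rpow_pow_comm zero_le_two, pow_succ, Real.mul_rpow (by positivity) zero_le_two,
            ← mul_assoc, mul_comm, ← mul_assoc, ← Real.rpow_add two_pos, neg_add_cancel,
            Real.rpow_zero, one_mul]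
      _ ≤ 2 ^ γ * z ^ (-γ) := mul_le_mul_of_nonneg_left
          (Real.rpow_le_rpow_of_nonpos (by linarith) hzn.le (neg_nonpos.2 hγ)) (by positivity)
  calc f (y * z) ≤ f (2 ^ n * y) := hf (by rw [mul_comm y]; gcongr)
    _ ≤ (2 ^ (-γ)) ^ n * f y := hdyadic n
    _ ≤ 2 ^ γ * z ^ (-γ) * f y := mul_le_mul_of_nonneg_right hpow (hf0 y)

theorem integrableOn_Ioi_one_sub_one_rpow_mul_rpow_neg {δ γ : ℝ} (hδ : 1 ≤ δ) (hδγ : δ < γ) :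
    IntegrableOn (fun z : ℝ => (z - 1) ^ (δ - 1) * z ^ (-γ)) (Ioi 1) := by
  refine Integrable.mono' (integrableOn_Ioi_rpow_of_lt (by linarith : δ - 1 - γ < -1) one_pos)
    (((measurable_id.sub_const 1).pow_const _).mul (measurable_id.pow_const _)).aestronglyMeasurable
    (ae_restrict_of_forall_mem measurableSet_Ioi fun z (hz : 1 < z) => ?_)
  rw [Real.norm_of_nonneg (by positivity), sub_eq_add_neg _ γ, Real.rpow_add (by linarith)]
  gcongr
  linarith

theorem RegularlyVaryingAtTop.tendsto_integral_div {F : ℝ → ℝ} {β δ : ℝ}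
    (hRV : RegularlyVaryingAtTop F (-β)) (hF : Antitone F) (hpos : ∀ x, 0 < F x)
    (hδ : 1 ≤ δ) (hδβ : δ < β) :
    Tendsto (fun y => (∫ z in Ioi 1, (z - 1) ^ (δ - 1) * F (y * z)) / F y) atTop
      (𝓝 (∫ z in Ioi 1, (z - 1) ^ (δ - 1) * z ^ (-β))) := by
  obtain ⟨γ, hδγ, hγβ⟩ := exists_between hδβ
  have h2 : ∀ᶠ y in atTop, F (2 * y) ≤ 2 ^ (-γ) * F y := by
    filter_upwards [(hRV 2 two_pos).eventually_lt_const
      (Real.rpow_lt_rpow_of_exponent_lt one_lt_two (neg_lt_neg hγβ))] with y hy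
    exact ((div_lt_iff₀ (hpos y)).1 hy).le
  have hPotter := hF.eventually_le_two_rpow_mul_rpow_neg (fun x => (hpos x).le) (by linarith) h2
  simp_rw [← integral_div, mul_div_assoc]
  refine tendsto_integral_filter_of_dominated_convergence
    (fun z => 2 ^ γ * ((z - 1) ^ (δ - 1) * z ^ (-γ)))
    (.of_forall fun y => (((measurable_id.sub_const 1).pow_const _).mul
      ((hF.measurable.comp (measurable_const_mul y)).div_const _)).aestronglyMeasurable) ?_
    ((integrableOn_Ioi_one_sub_one_rpow_mul_rpow_neg hδ hδγ).const_mul _)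
    (ae_restrict_of_forall_mem measurableSet_Ioi fun z (hz : 1 < z) =>
      ((hRV z (by linarith)).congr fun y => by rw [mul_comm z]).const_mul _)
  filter_upwards [hPotter] with y hy
  refine ae_restrict_of_forall_mem measurableSet_Ioi fun z (hz : 1 < z) => ?_
  have hratio : F (y * z) / F y ≤ 2 ^ γ * z ^ (-γ) := (div_le_iff₀ (hpos y)).2 (hy z hz.le)
  rw [Real.norm_of_nonneg (mul_nonneg (by positivity) (div_nonneg (hpos _).le (hpos y).le)),
    mul_left_comm]
  gcongr

end RegularVariation

theorem stmt9_general {Ω : Type*} [MeasurableSpace Ω] (μ : Measure Ω) [IsProbabilityMeasure μ]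
    (Z : Ω → ℝ) (hZmeas : Measurable Z)
    (β : ℝ) (δ : ℝ) (hδ2 : 2 ≤ δ) (hδβ : δ < β)
    (Fbar : ℝ → ℝ) (hFbar : ∀ x, Fbar x = (μ {ω | x < Z ω}).toReal)
    (hRV : ∀ s : ℝ, 0 < s →
      Tendsto (fun x : ℝ => Fbar (s * x) / Fbar x) atTop (nhds (s ^ (-β))))
    (hpos : ∀ x : ℝ, 0 < Fbar x) (s : ℝ) (hs : 0 < s) :
    Tendsto
      (fun x : ℝ =>
        (∫ ω, (max (Z ω - x * s) 0) ^ δ ∂μ) / (x ^ δ * Fbar x * s ^ (δ - β)))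
      atTop
      (nhds (δ * ∫ z in Set.Ioi (1 : ℝ), (z - 1) ^ (δ - 1) * z ^ (-β))) := by
  have hFbar_anti : Antitone Fbar := fun u v huv => by
    rw [hFbar, hFbar]
    exact measureReal_mono fun ω hω => huv.trans_lt hω
  have htail := (RegularlyVaryingAtTop.tendsto_integral_div hRV hFbar_anti hpos (by linarith)
    hδβ).comp (tendsto_id.atTop_mul_const hs)
  have hratio : Tendsto (fun x => Fbar (x * s) / Fbar x) atTop (𝓝 (s ^ (-β))) :=
    (hRV s hs).congr fun x => by rw [mul_comm]
  rw [show ∀ I : ℝ, δ * I = δ * s ^ β * (I * s ^ (-β)) from fun I => by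
    rw [Real.rpow_neg hs.le]; field_simp]
  refine ((htail.mul hratio).const_mul _).congr' ?_
  filter_upwards [eventually_gt_atTop 0] with x hx
  rw [integral_max_sub_rpow_eq_mul_integral_Ioi_one μ hZmeas.aemeasurable (by linarith)
    (mul_pos hx hs)]
  simp only [measureReal_def, ← hFbar, Function.comp_apply, id]
  generalize ∫ z in Ioi 1, (z - 1) ^ (δ - 1) * Fbar (x * s * z) = K
  have hFx := (hpos x).ne'
  have hFxs := (hpos (x * s)).ne'
  rw [Real.mul_rpow hx.le hs.le, Real.rpow_sub hs]
  field_simp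

theorem stmt9 {Ω : Type*} [MeasurableSpace Ω] (μ : Measure Ω) [IsProbabilityMeasure μ]
    (Z : Ω → ℝ) (hZmeas : Measurable Z) (hZnonneg : ∀ ω, 0 ≤ Z ω)
    (β : ℝ) (hβ : 2 < β) (δ : ℝ) (hδ2 : 2 ≤ δ) (hδβ : δ < β)
    (Fbar : ℝ → ℝ) (hFbar : ∀ x, Fbar x = (μ {ω | x < Z ω}).toReal)
    (hRV : ∀ s : ℝ, 0 < s →
      Tendsto (fun x : ℝ => Fbar (s * x) / Fbar x) atTop (nhds (s ^ (-β))))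
    (hpos : ∀ x : ℝ, 0 < Fbar x) (s : ℝ) (hs : 0 < s) :
    Tendsto
      (fun x : ℝ =>
        (∫ ω, (max (Z ω - x * s) 0) ^ δ ∂μ) / (x ^ δ * Fbar x * s ^ (δ - β)))
      atTop
      (nhds (δ * ∫ z in Set.Ioi (1 : ℝ), (z - 1) ^ (δ - 1) * z ^ (-β))) :=
  stmt9_general μ Z hZmeas β δ hδ2 hδβ Fbar hFbar hRV hpos s hs
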